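/- For every even integer t ≥ 6 with t ≡ 2 (mod 4), the sequence [0, t, t−2, …, 2, t+2, t+1, t−1, t−3, …, 1] is a linear realization of {1, 2^{t−1}, t^2} on {0,…,t+2} which is special of type 1 (t+2 and t+1 adjacent) and of type 2 (endpoints 0 and 1). -/

import Mathlib

/-- Multiset of absolute differences of consecutive entries of a list. -/
def pathDiffs (l : List ℕ) : Multiset ℕ :=
  ↑(List.zipWith (fun x y => max x y - min x y) l l.tail)

/-- `l` is a linear realization of the multiset `L`: a permutation of
`{0, …, |L|}` whose multiset of consecutive absolute differences is `L`. -/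
def IsLinReal (L : Multiset ℕ) (l : List ℕ) : Prop :=
  l.Perm (List.range (Multiset.card L + 1)) ∧ pathDiffs l = L

/-- The cyclic edge-length `ℓ(x,y) = min(|x−y|, v−|x−y|)` in `K_v`. -/
def cycLen (v x y : ℕ) : ℕ := min (max x y - min x y) (v - (max x y - min x y))

def cycDiffs (v : ℕ) (l : List ℕ) : Multiset ℕ :=
  ↑(List.zipWith (cycLen v) l l.tail)

/-- `l` is a cyclic realization of `L`: a Hamiltonian path of `K_v` on
`{0, …, v−1}` (with `v = |L|+1`) whose multiset of cyclic edge-lengths is `L`. -/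
def IsCycReal (L : Multiset ℕ) (l : List ℕ) : Prop :=
  l.Perm (List.range (Multiset.card L + 1)) ∧
    cycDiffs (Multiset.card L + 1) l = L

/-- Vertices `a` and `b` are adjacent (consecutive, in either order) in the path `l`. -/
def AdjIn (a b : ℕ) (l : List ℕ) : Prop :=
  [a, b] <:+: l ∨ [b, a] <:+: l

/-- The endpoints of the path `l` are `0` and `1`. -/
def Ends01 (l : List ℕ) : Prop :=
  (l.head? = some 0 ∧ l.getLast? = some 1) ∨
    (l.head? = some 1 ∧ l.getLast? = some 0)

/-! For `t = 2m` the path `0, 2m, 2m-2, …, 2, 2m+2, 2m+1, 2m-1, …, 1` visits the even numbers downwards,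
jumps up by `2m` to `2m+2`, steps down by `1` to `2m+1` and then visits the odd numbers
downwards. Its differences are therefore `2m` (from `0`), `2` (`m-1` times), `2m`, `1` and
`2` (`m` times), and every vertex of `{0, …, 2m+2}` is visited exactly once since the path has
`2m+3` entries and covers them all. -/

def descBy2 (n a : ℕ) : List ℕ := (List.range n).map (fun i => a - 2*i)

lemma descBy2_succ (n a : ℕ) : descBy2 (n+1) a = a :: descBy2 n (a-2) := by
  simp only [descBy2, List.range_succ_eq_map, List.map_cons, List.map_map]
  refine congrArg₂ _ (by omega) (List.map_congr_left fun i _ => ?_)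
  simp only [Function.comp_apply]
  omega

lemma descBy2_succ_eq_append (n a : ℕ) : descBy2 (n+1) a = descBy2 n a ++ [a - 2*n] := by
  simp [descBy2, List.range_succ]

@[simp]
lemma length_descBy2 (n a : ℕ) : (descBy2 n a).length = n := by simp [descBy2]

lemma mem_descBy2 {x n a : ℕ} : x ∈ descBy2 n a ↔ ∃ i < n, x = a - 2*i := by
  simp [descBy2, eq_comm]

lemma getLast?_descBy2 (n a : ℕ) : (descBy2 (n+1) a).getLast? = some (a - 2*n) := by
  simp [descBy2_succ_eq_append]

lemma pathDiffs_cons_cons (a b : ℕ) (l : List ℕ) :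
    pathDiffs (a :: b :: l) = (max a b - min a b) ::ₘ pathDiffs (b :: l) := rfl

lemma pathDiffs_append_cons (l₁ l₂ : List ℕ) (b : ℕ) :
    pathDiffs (l₁ ++ b :: l₂) = pathDiffs (l₁ ++ [b]) + pathDiffs (b :: l₂) := by
  induction l₁ with
  | nil => simp [pathDiffs]
  | cons a l₁ ih =>
    cases l₁ with
    | nil => simp [pathDiffs]
    | cons c l₁ =>
      simp only [List.cons_append, pathDiffs_cons_cons] at ih ⊢
      rw [ih, Multiset.cons_add]

lemma pathDiffs_descBy2 {n a : ℕ} (h : 2*n ≤ a) :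
    pathDiffs (descBy2 (n+1) a) = Multiset.replicate n 2 := by
  induction n generalizing a with
  | zero => simp [descBy2, pathDiffs]
  | succ n ih =>
    rw [descBy2_succ, descBy2_succ, pathDiffs_cons_cons, ← descBy2_succ, ih (by omega),
      Multiset.replicate_succ, show max a (a-2) - min a (a-2) = 2 by omega]

lemma pathDiffs_descBy2_append_singleton {n a : ℕ} (c : ℕ) (h : 2*n ≤ a) :
    pathDiffs (descBy2 (n+1) a ++ [c]) =
      Multiset.replicate n 2 + {max (a - 2*n) c - min (a - 2*n) c} := by
  rw [descBy2_succ_eq_append, List.append_assoc, List.singleton_append, pathDiffs_append_cons,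
    ← descBy2_succ_eq_append, pathDiffs_descBy2 h]
  rfl

def zigzag (m : ℕ) : List ℕ :=
  [0] ++ descBy2 m (2*m) ++ [2*m+2, 2*m+1] ++ descBy2 m (2*m-1)

lemma zigzag_eq (n : ℕ) :
    zigzag (n+1) = 0 :: (descBy2 (n+1) (2*n+2) ++ (2*n+4) :: descBy2 (n+2) (2*n+3)) := by
  simp [zigzag, descBy2_succ (n+1) (2*n+3), show 2*(n+1) = 2*n+2 by ring]

lemma length_zigzag (m : ℕ) : (zigzag m).length = 2*m + 3 := by
  simp only [zigzag, List.length_append, length_descBy2, List.length_cons, List.length_nil]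
  omega

lemma mem_zigzag {m x : ℕ} (hx : x < 2*m + 3) : x ∈ zigzag m := by
  simp only [zigzag, List.mem_append, List.mem_cons, mem_descBy2, List.not_mem_nil, or_false]
  rcases Nat.even_or_odd x with ⟨k, rfl⟩ | ⟨k, rfl⟩
  · by_cases hk : k = 0 ∨ k = m + 1
    · omega
    · exact Or.inl (Or.inl (Or.inr ⟨m - k, by omega, by omega⟩))
  · by_cases hk : k = m
    · omega
    · exact Or.inr ⟨m - 1 - k, by omega, by omega⟩

lemma zigzag_perm_range (m : ℕ) : (zigzag m).Perm (List.range (2*m + 3)) := by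
  refine (List.Subperm.perm_of_length_le ?_ (by simp [length_zigzag])).symm
  exact List.subperm_of_subset List.nodup_range fun x hx => mem_zigzag (List.mem_range.1 hx)

lemma pathDiffs_zigzag {m : ℕ} (hm : 0 < m) :
    pathDiffs (zigzag m) =
      {1} + Multiset.replicate (2*m - 1) 2 + Multiset.replicate 2 (2*m) := by
  obtain ⟨n, rfl⟩ : ∃ n, m = n + 1 := ⟨m - 1, by omega⟩
  rw [zigzag_eq, descBy2_succ n, List.cons_append, pathDiffs_cons_cons, ← List.cons_append,
    ← descBy2_succ, pathDiffs_append_cons, pathDiffs_descBy2_append_singleton _ (by omega),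
    descBy2_succ (n+1), pathDiffs_cons_cons, ← descBy2_succ, pathDiffs_descBy2 (by omega)]
  simp only [show max 0 (2*n+2) - min 0 (2*n+2) = 2*n+2 by omega,
    show max (2*n+2 - 2*n) (2*n+4) - min (2*n+2 - 2*n) (2*n+4) = 2*n+2 by omega,
    show max (2*n+4) (2*n+3) - min (2*n+4) (2*n+3) = 1 by omega,
    show 2*(n+1) = 2*n+2 by ring,
    show 2*n+2 - 1 = n + (n+1) by omega, Multiset.replicate_add, Multiset.replicate_succ,
    Multiset.replicate_zero, ← Multiset.singleton_add]
  abel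

lemma isLinReal_zigzag {m : ℕ} (hm : 0 < m) :
    IsLinReal ({1} + Multiset.replicate (2*m - 1) 2 + Multiset.replicate 2 (2*m)) (zigzag m) := by
  refine ⟨?_, pathDiffs_zigzag hm⟩
  convert zigzag_perm_range m using 2
  simp only [Multiset.card_add, Multiset.card_singleton, Multiset.card_replicate]
  omega

lemma adjIn_zigzag (m : ℕ) : AdjIn (2*m+2) (2*m+1) (zigzag m) :=
  Or.inl ⟨[0] ++ descBy2 m (2*m), descBy2 m (2*m-1), by simp [zigzag]⟩

lemma ends01_zigzag {m : ℕ} (hm : 0 < m) : Ends01 (zigzag m) := by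
  obtain ⟨n, rfl⟩ : ∃ n, m = n + 1 := ⟨m - 1, by omega⟩
  refine Or.inl ⟨rfl, ?_⟩
  rw [zigzag, List.getLast?_append_of_ne_nil _ (by simp [descBy2]), getLast?_descBy2]
  congr 1
  omega

theorem stmt8_general (t : ℕ) (hmod : t % 4 = 2) :
    ∃ l : List ℕ,
      l = [0] ++ (List.range (t/2)).map (fun i => t - 2*i) ++ [t+2, t+1] ++
          (List.range (t/2)).map (fun i => t - 1 - 2*i) ∧
      IsLinReal ({1} + Multiset.replicate (t-1) 2 + Multiset.replicate 2 t) l ∧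
      AdjIn (t+2) (t+1) l ∧ Ends01 l := by
  obtain ⟨m, rfl⟩ : ∃ m, t = 2*m := ⟨t/2, by omega⟩
  have hm : 0 < m := by omega
  refine ⟨zigzag m, ?_, isLinReal_zigzag hm, adjIn_zigzag m, ends01_zigzag hm⟩
  rw [Nat.mul_div_cancel_left m two_pos]
  rfl

theorem stmt8 (t : ℕ) (h6 : 6 ≤ t) (hmod : t % 4 = 2) :
    ∃ l : List ℕ,
      l = [0] ++ (List.range (t/2)).map (fun i => t - 2*i) ++ [t+2, t+1] ++
          (List.range (t/2)).map (fun i => t - 1 - 2*i) ∧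
      IsLinReal ({1} + Multiset.replicate (t-1) 2 + Multiset.replicate 2 t) l ∧
      AdjIn (t+2) (t+1) l ∧ Ends01 l :=
  stmt8_general t hmod
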